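/- Let 0 < a ≤ b and let (B_k) be symmetric matrices with aI ⪯ B_k ⪯ bI for all k. If there is an infinite set K ⊆ ℕ and a point x* ∈ ℝⁿ such that x_k → x* and d_{B_k}(x_k) → 0 as k → ∞ along K, then x* is Pareto critical. -/

import Mathlib

open RealInnerProductSpace

noncomputable section

abbrev E (n : ℕ) := EuclideanSpace ℝ (Fin n)

def maxD {n m : ℕ} [NeZero m] (f : Fin m → E n → ℝ) (x d : E n) : ℝ :=
  Finset.univ.sup' Finset.univ_nonempty (fun i => ⟪gradient (f i) x, d⟫)

def ParetoCritical {n m : ℕ} (f : Fin m → E n → ℝ) (x : E n) : Prop :=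
  ∀ d : E n, ∃ i, 0 ≤ ⟪gradient (f i) x, d⟫

def quad {n : ℕ} (B : Matrix (Fin n) (Fin n) ℝ) (d : E n) : ℝ :=
  ∑ i, ∑ j, d i * B i j * d j

/-!
Compare the minimiser `d k` with the competitor `t • v` for fixed `t > 0`: since
`a‖w‖² ≤ wᵀ B_k w ≤ b‖w‖²`, the optimality of `d k` gives
`maxD f (x k) (d k) + a‖d k‖²/2 ≤ t · maxD f (x k) v + t² b‖v‖²/2`.
The max of finitely many continuous gradients is continuous, so passing to the limit along `φ`
yields `0 ≤ t · maxD f xs v + t² b‖v‖²/2` for every `t > 0`, hence `0 ≤ maxD f xs v`,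
which for all `v` is Pareto criticality.
-/

lemma ContDiff.continuous_gradient {F : Type*} [NormedAddCommGroup F] [InnerProductSpace ℝ F]
    [CompleteSpace F] {f : F → ℝ} (hf : ContDiff ℝ 1 f) : Continuous (gradient f) :=
  (InnerProductSpace.toDual ℝ F).symm.continuous.comp (hf.continuous_fderiv one_ne_zero)

variable {n m : ℕ}

lemma quad_eq_dotProduct (B : Matrix (Fin n) (Fin n) ℝ) (w : E n) :
    quad B w = dotProduct (⇑w) (B.mulVec ⇑w) := by
  simp only [quad, dotProduct, Matrix.mulVec, Finset.mul_sum]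
  exact Finset.sum_congr rfl fun i _ => Finset.sum_congr rfl fun j _ => by ring

lemma quad_nonneg {B : Matrix (Fin n) (Fin n) ℝ} (hB : B.PosSemidef) (w : E n) :
    0 ≤ quad B w := by
  simpa [quad_eq_dotProduct] using hB.dotProduct_mulVec_nonneg (⇑w)

lemma quad_sub (A B : Matrix (Fin n) (Fin n) ℝ) (w : E n) :
    quad (A - B) w = quad A w - quad B w := by
  simp only [quad, Matrix.sub_apply, mul_sub, sub_mul, Finset.sum_sub_distrib]

lemma quad_smul_one (c : ℝ) (w : E n) : quad (c • 1) w = c * ‖w‖ ^ 2 := by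
  simp only [quad, Matrix.smul_apply, Matrix.one_apply, smul_eq_mul, mul_ite, mul_one, mul_zero,
    ite_mul, zero_mul, Finset.sum_ite_eq, Finset.mem_univ, ↓reduceIte,
    EuclideanSpace.real_norm_sq_eq, Finset.mul_sum]
  exact Finset.sum_congr rfl fun i _ => by ring

lemma quad_smul (B : Matrix (Fin n) (Fin n) ℝ) (t : ℝ) (w : E n) :
    quad B (t • w) = t ^ 2 * quad B w := by
  simp only [quad, PiLp.smul_apply, smul_eq_mul, Finset.mul_sum]
  exact Finset.sum_congr rfl fun i _ => Finset.sum_congr rfl fun j _ => by ring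

lemma mul_norm_sq_le_quad {B : Matrix (Fin n) (Fin n) ℝ} {a : ℝ}
    (h : (B - a • 1).PosSemidef) (w : E n) : a * ‖w‖ ^ 2 ≤ quad B w := by
  have := quad_nonneg h w
  rw [quad_sub, quad_smul_one] at this
  linarith

lemma quad_le_mul_norm_sq {B : Matrix (Fin n) (Fin n) ℝ} {b : ℝ}
    (h : (b • 1 - B).PosSemidef) (w : E n) : quad B w ≤ b * ‖w‖ ^ 2 := by
  have := quad_nonneg h w
  rw [quad_sub, quad_smul_one] at this
  linarith

variable [NeZero m] {f : Fin m → E n → ℝ}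

lemma continuous_maxD (hf : ∀ i, Continuous (gradient (f i))) :
    Continuous fun p : E n × E n => maxD f p.1 p.2 :=
  Continuous.finset_sup'_apply _ fun i _ => ((hf i).comp continuous_fst).inner continuous_snd

lemma maxD_smul (x v : E n) {t : ℝ} (ht : 0 ≤ t) : maxD f x (t • v) = t * maxD f x v := by
  simp only [maxD, real_inner_smul_right]
  exact (Finset.apply_sup'_eq_sup'_comp _ (t * ·) fun p q => mul_max_of_nonneg p q ht).symm

lemma maxD_zero (x : E n) : maxD f x 0 = 0 := by
  simpa using maxD_smul (f := f) x 0 le_rfl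

lemma paretoCritical_iff_forall_maxD_nonneg {x : E n} :
    ParetoCritical f x ↔ ∀ v, 0 ≤ maxD f x v := by
  refine forall_congr' fun v => ?_
  simp only [maxD, Finset.le_sup'_iff, Finset.mem_univ, true_and]

lemma nonneg_of_forall_pos_le_mul_add_sq {M C : ℝ} (h : ∀ t > 0, 0 ≤ t * M + t ^ 2 * C) :
    0 ≤ M := by
  have hlim : Filter.Tendsto (fun t : ℝ => M + t * C) (nhdsWithin 0 (Set.Ioi 0)) (nhds M) :=
    ((by fun_prop : Continuous fun t : ℝ => M + t * C).tendsto' 0 M (by simp)).mono_left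
      nhdsWithin_le_nhds
  refine ge_of_tendsto hlim (eventually_nhdsWithin_of_forall fun t (ht : 0 < t) => ?_)
  have := h t ht
  nlinarith

theorem stmt7_general {n m : ℕ} [NeZero m] (f : Fin m → E n → ℝ)
    (hf : ∀ i, ContDiff ℝ 1 (f i))
    (a b : ℝ)
    (B : ℕ → Matrix (Fin n) (Fin n) ℝ)
    (hBlow : ∀ k, (B k - a • (1 : Matrix (Fin n) (Fin n) ℝ)).PosSemidef)
    (hBup : ∀ k, ((b • (1 : Matrix (Fin n) (Fin n) ℝ)) - B k).PosSemidef)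
    (x d : ℕ → E n)
    (hd : ∀ k, ∀ dd : E n, maxD f (x k) (d k) + quad (B k) (d k) / 2 ≤
        maxD f (x k) dd + quad (B k) dd / 2)
    (xs : E n) (φ : ℕ → ℕ)
    (hx : Filter.Tendsto (fun k => x (φ k)) Filter.atTop (nhds xs))
    (hd0 : Filter.Tendsto (fun k => d (φ k)) Filter.atTop (nhds (0 : E n))) :
    ParetoCritical f xs := by
  have hmaxD := continuous_maxD fun i => (hf i).continuous_gradient
  refine paretoCritical_iff_forall_maxD_nonneg.2 fun v =>
    nonneg_of_forall_pos_le_mul_add_sq (C := b * ‖v‖ ^ 2 / 2) fun t ht => ?_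
  have hle : ∀ k, maxD f (x (φ k)) (d (φ k)) + a * ‖d (φ k)‖ ^ 2 / 2 ≤
      t * maxD f (x (φ k)) v + t ^ 2 * (b * ‖v‖ ^ 2 / 2) := fun k => by
    have hmin := hd (φ k) (t • v)
    rw [maxD_smul _ _ ht.le, quad_smul] at hmin
    nlinarith [mul_norm_sq_le_quad (hBlow (φ k)) (d (φ k)),
      quad_le_mul_norm_sq (hBup (φ k)) v, sq_nonneg t]
  have hlhs : Filter.Tendsto (fun k => maxD f (x (φ k)) (d (φ k)) + a * ‖d (φ k)‖ ^ 2 / 2)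
      Filter.atTop (nhds 0) := by
    have := ((hmaxD.tendsto (xs, 0)).comp (hx.prodMk_nhds hd0)).add
      (((hd0.norm.pow 2).const_mul a).div_const 2)
    simpa [maxD_zero] using this
  have hrhs := (((hmaxD.tendsto (xs, v)).comp (hx.prodMk_nhds tendsto_const_nhds)).const_mul
    t).add_const (t ^ 2 * (b * ‖v‖ ^ 2 / 2))
  exact le_of_tendsto_of_tendsto' hlhs hrhs hle

/-- if x_k → x* and d_{B_k}(x_k) → 0 along a subsequence, with
aI ⪯ B_k ⪯ bI, then x* is Pareto critical. -/
theorem stmt7 {n m : ℕ} [NeZero m] (f : Fin m → E n → ℝ)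
    (hf : ∀ i, ContDiff ℝ 1 (f i))
    (a b : ℝ) (ha : 0 < a) (hab : a ≤ b)
    (B : ℕ → Matrix (Fin n) (Fin n) ℝ) (hsymm : ∀ k, (B k).IsSymm)
    (hBlow : ∀ k, (B k - a • (1 : Matrix (Fin n) (Fin n) ℝ)).PosSemidef)
    (hBup : ∀ k, ((b • (1 : Matrix (Fin n) (Fin n) ℝ)) - B k).PosSemidef)
    (x d : ℕ → E n)
    (hd : ∀ k, ∀ dd : E n, maxD f (x k) (d k) + quad (B k) (d k) / 2 ≤
        maxD f (x k) dd + quad (B k) dd / 2)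
    (xs : E n) (φ : ℕ → ℕ) (hφ : StrictMono φ)
    (hx : Filter.Tendsto (fun k => x (φ k)) Filter.atTop (nhds xs))
    (hd0 : Filter.Tendsto (fun k => d (φ k)) Filter.atTop (nhds (0 : E n))) :
    ParetoCritical f xs :=
  stmt7_general f hf a b B hBlow hBup x d hd xs φ hx hd0
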